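/- Let V be a finite-dimensional real inner product space and let A₁, A₂ : V → V be linear maps. Define Δᵢ = Aᵢ Aᵢ* + Aᵢ* Aᵢ, where * denotes the adjoint. Let λ_j(Δᵢ) denote the j-th eigenvalue of Δᵢ counted with multiplicity in nondecreasing order. Then for each j, |λ_j(Δ₁)^{1/2} − λ_j(Δ₂)^{1/2}| ≤ (2 + √2)·‖A₁ − A₂‖, where ‖·‖ is the operator norm. -/
import Mathlib

open ContinuousLinearMap
open scoped RealInnerProductSpace

private lemma sqrt_minkowski_aux {a b a' b' ε : ℝ} (ha : 0 ≤ a) (hb : 0 ≤ b)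
    (ha' : 0 ≤ a') (hb' : 0 ≤ b') (hε : 0 ≤ ε) (h1 : a ≤ a' + ε) (h2 : b ≤ b' + ε) :
    Real.sqrt (a ^ 2 + b ^ 2) ≤ Real.sqrt (a' ^ 2 + b' ^ 2) + Real.sqrt 2 * ε := by
  set s := Real.sqrt (a' ^ 2 + b' ^ 2) with hs_def
  have hs0 : 0 ≤ s := Real.sqrt_nonneg _
  have hs : s ^ 2 = a' ^ 2 + b' ^ 2 := Real.sq_sqrt (by positivity)
  have h2' : Real.sqrt 2 ^ 2 = 2 := Real.sq_sqrt (by norm_num)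
  have hsab : a' + b' ≤ Real.sqrt 2 * s := by
    have h := Real.sqrt_le_sqrt (show (a' + b') ^ 2 ≤ 2 * s ^ 2 by nlinarith [sq_nonneg (a' - b')])
    rwa [Real.sqrt_sq (by positivity), Real.sqrt_mul (by norm_num), Real.sqrt_sq hs0] at h
  have key : a ^ 2 + b ^ 2 ≤ (s + Real.sqrt 2 * ε) ^ 2 := by
    have ha2 : a ^ 2 ≤ (a' + ε) ^ 2 := by nlinarith
    have hb2 : b ^ 2 ≤ (b' + ε) ^ 2 := by nlinarith
    have hmul : ε * (a' + b') ≤ ε * (Real.sqrt 2 * s) := mul_le_mul_of_nonneg_left hsab hε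
    have h2ε : Real.sqrt 2 ^ 2 * ε ^ 2 = 2 * ε ^ 2 := by rw [h2']
    nlinarith [ha2, hb2, hmul, h2ε, hs]
  calc Real.sqrt (a ^ 2 + b ^ 2) ≤ Real.sqrt ((s + Real.sqrt 2 * ε) ^ 2) :=
        Real.sqrt_le_sqrt key
    _ = s + Real.sqrt 2 * ε := Real.sqrt_sq (by positivity)

private lemma quad_repr {V : Type*} [NormedAddCommGroup V] [InnerProductSpace ℝ V]
    [FiniteDimensional ℝ V] {d : ℕ} (T : V →L[ℝ] V)
    (hT : ∀ u v : V, ⟪T u, v⟫ = ⟪u, T v⟫)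
    (b : OrthonormalBasis (Fin d) ℝ V) (μ : Fin d → ℝ)
    (h : ∀ i, T (b i) = μ i • b i) (x : V) :
    ⟪T x, x⟫ = ∑ i, μ i * (b.repr x i) ^ 2 := by
  rw [← b.sum_inner_mul_inner (T x) x]
  refine Finset.sum_congr rfl fun i _ => ?_
  rw [b.repr_apply_apply, hT, h i, real_inner_smul_right, real_inner_comm x (b i)]
  ring

private lemma quad_symm {V : Type*} [NormedAddCommGroup V] [InnerProductSpace ℝ V]
    [FiniteDimensional ℝ V] (A : V →L[ℝ] V) (u v : V) :
    ⟪(A ∘L adjoint A + adjoint A ∘L A) u, v⟫ = ⟪u, (A ∘L adjoint A + adjoint A ∘L A) v⟫ := by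
  simp only [add_apply, comp_apply, inner_add_left, inner_add_right]
  rw [(adjoint_inner_right A (adjoint A u) v).symm, adjoint_inner_left A v (A u),
    ← (adjoint_inner_left A (adjoint A v) u), ← adjoint_inner_right A u (A v)]

private lemma quad_norm {V : Type*} [NormedAddCommGroup V] [InnerProductSpace ℝ V]
    [FiniteDimensional ℝ V] (A : V →L[ℝ] V) (x : V) :
    ⟪(A ∘L adjoint A + adjoint A ∘L A) x, x⟫ = ‖adjoint A x‖ ^ 2 + ‖A x‖ ^ 2 := by
  have e1 : ⟪A (adjoint A x), x⟫ = ⟪adjoint A x, adjoint A x⟫ :=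
    (adjoint_inner_right A (adjoint A x) x).symm
  have e2 : ⟪adjoint A (A x), x⟫ = ⟪A x, A x⟫ := adjoint_inner_left A x (A x)
  simp only [add_apply, comp_apply, inner_add_left, e1, e2, real_inner_self_eq_norm_sq]

private lemma repr_eq_zero_of_mem_span {V : Type*} [NormedAddCommGroup V]
    [InnerProductSpace ℝ V] [FiniteDimensional ℝ V] {d : ℕ}
    (b : OrthonormalBasis (Fin d) ℝ V) (P : Fin d → Prop) {x : V}
    (hx : x ∈ Submodule.span ℝ (Set.range fun i : {i : Fin d // P i} => b i))
    {i : Fin d} (hi : ¬ P i) : b.repr x i = 0 := by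
  rw [b.repr_apply_apply]
  induction hx using Submodule.span_induction with
  | mem z hz =>
    obtain ⟨k, rfl⟩ := hz
    exact b.orthonormal.2 (fun h => hi (h ▸ k.2))
  | zero => simp
  | add _ _ _ _ h1 h2 => simp [inner_add_right, h1, h2]
  | smul c _ _ h1 => simp [inner_smul_right, h1]

private lemma one_sided {V : Type*} [NormedAddCommGroup V] [InnerProductSpace ℝ V]
    [FiniteDimensional ℝ V] (A₁ A₂ : V →L[ℝ] V) {d : ℕ}
    (μ₁ μ₂ : Fin d → ℝ) (hμ₁ : Monotone μ₁) (hμ₂ : Monotone μ₂)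
    (b₁ b₂ : OrthonormalBasis (Fin d) ℝ V)
    (h₁ : ∀ i, (A₁ ∘L adjoint A₁ + adjoint A₁ ∘L A₁) (b₁ i) = μ₁ i • b₁ i)
    (h₂ : ∀ i, (A₂ ∘L adjoint A₂ + adjoint A₂ ∘L A₂) (b₂ i) = μ₂ i • b₂ i)
    (j : Fin d) :
    Real.sqrt (μ₂ j) ≤ Real.sqrt (μ₁ j) + Real.sqrt 2 * ‖A₁ - A₂‖ := by
  classical
  set W₁ : Submodule ℝ V :=
    Submodule.span ℝ (Set.range fun i : {i : Fin d // i ≤ j} => b₁ i) with hW₁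
  set W₂ : Submodule ℝ V :=
    Submodule.span ℝ (Set.range fun i : {i : Fin d // j ≤ i} => b₂ i) with hW₂
  have hV : Module.finrank ℝ V = d := by
    rw [Module.finrank_eq_card_basis b₁.toBasis, Fintype.card_fin]
  have hr₁ : Module.finrank ℝ W₁ = (j : ℕ) + 1 := by
    have hcard : Fintype.card {i : Fin d // i ≤ j} = (j : ℕ) + 1 := by
      rw [Fintype.card_subtype,
        show Finset.filter (fun x => x ≤ j) Finset.univ = Finset.Iic j by ext; simp,
        Fin.card_Iic]
    have h := finrank_span_eq_card (R := ℝ)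
      (b₁.orthonormal.linearIndependent.comp
        ((↑) : {i : Fin d // i ≤ j} → Fin d) Subtype.coe_injective)
    exact h.trans hcard
  have hr₂ : Module.finrank ℝ W₂ = d - (j : ℕ) := by
    have hcard : Fintype.card {i : Fin d // j ≤ i} = d - (j : ℕ) := by
      rw [Fintype.card_subtype,
        show Finset.filter (fun x => j ≤ x) Finset.univ = Finset.Ici j by ext; simp,
        Fin.card_Ici]
    have h := finrank_span_eq_card (R := ℝ)
      (b₂.orthonormal.linearIndependent.comp
        ((↑) : {i : Fin d // j ≤ i} → Fin d) Subtype.coe_injective)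
    exact h.trans hcard
  have hsum := Submodule.finrank_sup_add_finrank_inf_eq W₁ W₂
  have hle : Module.finrank ℝ ↥(W₁ ⊔ W₂) ≤ d := hV ▸ Submodule.finrank_le _
  have hjd : (j : ℕ) < d := j.isLt
  have hpos : 0 < Module.finrank ℝ ↥(W₁ ⊓ W₂) := by omega
  have hne : W₁ ⊓ W₂ ≠ ⊥ := by
    intro h
    rw [h, finrank_bot] at hpos
    exact lt_irrefl 0 hpos
  obtain ⟨y, hy, hy0⟩ := Submodule.exists_mem_ne_zero_of_ne_bot hne
  set x : V := ‖y‖⁻¹ • y with hx_def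
  have hx_norm : ‖x‖ = 1 := norm_smul_inv_norm hy0
  have hxW₁ : x ∈ W₁ := Submodule.smul_mem _ _ hy.1
  have hxW₂ : x ∈ W₂ := Submodule.smul_mem _ _ hy.2
  have hvan₁ : ∀ i : Fin d, ¬ i ≤ j → b₁.repr x i = 0 := fun i hi =>
    repr_eq_zero_of_mem_span b₁ (· ≤ j) hxW₁ hi
  have hvan₂ : ∀ i : Fin d, ¬ j ≤ i → b₂.repr x i = 0 := fun i hi =>
    repr_eq_zero_of_mem_span b₂ (j ≤ ·) hxW₂ hi
  have hsq : ∀ b : OrthonormalBasis (Fin d) ℝ V, ∑ i, (b.repr x i) ^ 2 = 1 := by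
    intro b
    have h := b.sum_inner_mul_inner x x
    calc ∑ i, (b.repr x i) ^ 2 = ∑ i, ⟪x, b i⟫ * ⟪b i, x⟫ := by
          refine Finset.sum_congr rfl fun i _ => ?_
          rw [sq, b.repr_apply_apply, real_inner_comm x (b i)]
      _ = ⟪x, x⟫ := h
      _ = 1 := by rw [real_inner_self_eq_norm_sq, hx_norm]; norm_num
  have hub : ⟪(A₁ ∘L adjoint A₁ + adjoint A₁ ∘L A₁) x, x⟫ ≤ μ₁ j := by
    rw [quad_repr _ (quad_symm A₁) b₁ μ₁ h₁ x]
    calc ∑ i, μ₁ i * (b₁.repr x i) ^ 2 ≤ ∑ i, μ₁ j * (b₁.repr x i) ^ 2 := by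
          refine Finset.sum_le_sum fun i _ => ?_
          by_cases hij : i ≤ j
          · exact mul_le_mul_of_nonneg_right (hμ₁ hij) (sq_nonneg _)
          · rw [hvan₁ i hij]; simp
      _ = μ₁ j := by rw [← Finset.mul_sum, hsq b₁, mul_one]
  have hlb : μ₂ j ≤ ⟪(A₂ ∘L adjoint A₂ + adjoint A₂ ∘L A₂) x, x⟫ := by
    rw [quad_repr _ (quad_symm A₂) b₂ μ₂ h₂ x]
    calc μ₂ j = ∑ i, μ₂ j * (b₂.repr x i) ^ 2 := by rw [← Finset.mul_sum, hsq b₂, mul_one]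
      _ ≤ ∑ i, μ₂ i * (b₂.repr x i) ^ 2 := by
          refine Finset.sum_le_sum fun i _ => ?_
          by_cases hij : j ≤ i
          · exact mul_le_mul_of_nonneg_right (hμ₂ hij) (sq_nonneg _)
          · rw [hvan₂ i hij]; simp
  -- norm perturbation bounds
  have hA : ‖A₂ x‖ ≤ ‖A₁ x‖ + ‖A₁ - A₂‖ := by
    have h1 : ‖A₂ x - A₁ x‖ ≤ ‖A₁ - A₂‖ := by
      calc ‖A₂ x - A₁ x‖ = ‖(A₂ - A₁) x‖ := by simp
        _ ≤ ‖A₂ - A₁‖ * ‖x‖ := le_opNorm _ _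
        _ = ‖A₁ - A₂‖ := by rw [hx_norm, norm_sub_rev, mul_one]
    linarith [norm_sub_norm_le (A₂ x) (A₁ x)]
  have hAadj : ‖adjoint A₂ x‖ ≤ ‖adjoint A₁ x‖ + ‖A₁ - A₂‖ := by
    have h1 : ‖adjoint A₂ x - adjoint A₁ x‖ ≤ ‖A₁ - A₂‖ := by
      have hsub : adjoint A₂ x - adjoint A₁ x = (adjoint (A₂ - A₁)) x := by
        rw [map_sub]; simp
      calc ‖adjoint A₂ x - adjoint A₁ x‖ = ‖(adjoint (A₂ - A₁)) x‖ := by rw [hsub]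
        _ ≤ ‖adjoint (A₂ - A₁)‖ * ‖x‖ := le_opNorm _ _
        _ = ‖A₁ - A₂‖ := by
            rw [hx_norm, mul_one, LinearIsometryEquiv.norm_map, norm_sub_rev]
    linarith [norm_sub_norm_le (adjoint A₂ x) (adjoint A₁ x)]
  calc Real.sqrt (μ₂ j)
      ≤ Real.sqrt ⟪(A₂ ∘L adjoint A₂ + adjoint A₂ ∘L A₂) x, x⟫ := Real.sqrt_le_sqrt hlb
    _ = Real.sqrt (‖adjoint A₂ x‖ ^ 2 + ‖A₂ x‖ ^ 2) := by rw [quad_norm]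
    _ ≤ Real.sqrt (‖adjoint A₁ x‖ ^ 2 + ‖A₁ x‖ ^ 2) + Real.sqrt 2 * ‖A₁ - A₂‖ :=
        sqrt_minkowski_aux (norm_nonneg _) (norm_nonneg _) (norm_nonneg _) (norm_nonneg _)
          (norm_nonneg _) hAadj hA
    _ = Real.sqrt ⟪(A₁ ∘L adjoint A₁ + adjoint A₁ ∘L A₁) x, x⟫ + Real.sqrt 2 * ‖A₁ - A₂‖ := by
        rw [quad_norm]
    _ ≤ Real.sqrt (μ₁ j) + Real.sqrt 2 * ‖A₁ - A₂‖ := by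
        have := Real.sqrt_le_sqrt hub
        linarith

open ContinuousLinearMap in
theorem stmt_7 {V : Type*} [NormedAddCommGroup V] [InnerProductSpace ℝ V]
    [FiniteDimensional ℝ V] (A₁ A₂ : V →L[ℝ] V) (d : ℕ)
    (μ₁ μ₂ : Fin d → ℝ) (hμ₁ : Monotone μ₁) (hμ₂ : Monotone μ₂)
    (b₁ b₂ : OrthonormalBasis (Fin d) ℝ V)
    (h₁ : ∀ i, (A₁ ∘L adjoint A₁ + adjoint A₁ ∘L A₁) (b₁ i) = μ₁ i • b₁ i)
    (h₂ : ∀ i, (A₂ ∘L adjoint A₂ + adjoint A₂ ∘L A₂) (b₂ i) = μ₂ i • b₂ i)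
    (j : Fin d) :
    |Real.sqrt (μ₁ j) - Real.sqrt (μ₂ j)| ≤ (2 + Real.sqrt 2) * ‖A₁ - A₂‖ := by
  have K₁ := one_sided A₁ A₂ μ₁ μ₂ hμ₁ hμ₂ b₁ b₂ h₁ h₂ j
  have K₂ := one_sided A₂ A₁ μ₂ μ₁ hμ₂ hμ₁ b₂ b₁ h₂ h₁ j
  rw [norm_sub_rev] at K₂
  have hε : 0 ≤ ‖A₁ - A₂‖ := norm_nonneg _
  have h2 : Real.sqrt 2 * ‖A₁ - A₂‖ ≤ (2 + Real.sqrt 2) * ‖A₁ - A₂‖ := by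
    apply mul_le_mul_of_nonneg_right _ hε
    linarith [Real.sqrt_nonneg 2]
  rw [abs_sub_le_iff]
  constructor <;> linarith
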